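/- Monotonicity with respect to first-order stochastic dominance: under the benchmark setup, let φ_a and φ_b be two cash-flow densities (each continuous and positive exactly on an open interval) with CDFs F_a, F_b satisfying F_a(t) ≥ F_b(t) for all t ∈ ℝ, and assume both portfolio-value integrals are finite. Then V(φ_a) ≤ V(φ_b). -/

import Mathlib

/-!
Let `F`, `F₂` be the CDFs and `L := F⁻¹ ∘ F₂` the inverse of the binding map, with
`F⁻¹ : (0, 1) → I` the quantile function of `φ`. Since `F` is uniformly distributed under `φ dx`
and `{K ≤ y} = {F ≤ F₂ y}` on `I`, the binding map pushes `φ dx` forward to `φ₂ dy`; the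
substitution `y = K x` then turns the portfolio value into `∫_{I₂} L y * q y dy`.
First-order dominance `F_b ≤ F_a` reverses on quantiles, `F_a⁻¹ ≤ F_b⁻¹`, hence `L_a ≤ L_b` on
`I₂`, and `q ≥ 0` gives the comparison.
-/

open MeasureTheory Set Filter

noncomputable def cdfOf (φ : ℝ → ℝ) (x : ℝ) : ℝ := ∫ t in Set.Iic x, φ t

open ProbabilityTheory

noncomputable def densityMeasure (φ : ℝ → ℝ) : Measure ℝ :=
  volume.withDensity fun x => ENNReal.ofReal (φ x)

structure IsProbDensity (φ : ℝ → ℝ) : Prop where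
  nonneg : ∀ x, 0 ≤ φ x
  integrable : Integrable φ
  integral_eq_one : ∫ x, φ x = 1

structure IsProbDensityOn (φ : ℝ → ℝ) (I : Set ℝ) : Prop extends IsProbDensity φ where
  isOpen : IsOpen I
  pos_iff : ∀ x, 0 < φ x ↔ x ∈ I

def IsBindingMap (φ : ℝ → ℝ) (I : Set ℝ) (φ₂ : ℝ → ℝ) (I₂ : Set ℝ) (K : ℝ → ℝ) : Prop :=
  ∀ x ∈ I, K x ∈ I₂ ∧ cdfOf φ₂ (K x) = cdfOf φ x

noncomputable def quantileOn (φ : ℝ → ℝ) (I : Set ℝ) : ℝ → ℝ :=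
  Function.invFunOn (cdfOf φ) I

lemma continuous_cdfOf {φ : ℝ → ℝ} (hi : Integrable φ) : Continuous (cdfOf φ) := by
  have : cdfOf φ = fun x => cdfOf φ 0 + ∫ t in 0..x, φ t := funext fun x => by
    rw [← intervalIntegral.integral_Iic_sub_Iic hi.integrableOn hi.integrableOn, cdfOf, cdfOf]
    ring
  rw [this]
  exact continuous_const.add (hi.continuous_primitive 0)

namespace IsProbDensity

variable {φ : ℝ → ℝ}

lemma isProbabilityMeasure (h : IsProbDensity φ) : IsProbabilityMeasure (densityMeasure φ) := by
  constructor
  rw [densityMeasure, withDensity_apply _ MeasurableSet.univ, Measure.restrict_univ,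
    ← ofReal_integral_eq_lintegral_ofReal h.integrable (ae_of_all _ h.nonneg),
    h.integral_eq_one, ENNReal.ofReal_one]

lemma densityMeasure_Iic (h : IsProbDensity φ) (x : ℝ) :
    densityMeasure φ (Iic x) = ENNReal.ofReal (cdfOf φ x) := by
  rw [densityMeasure, withDensity_apply _ measurableSet_Iic, cdfOf,
    ofReal_integral_eq_lintegral_ofReal h.integrable.integrableOn (ae_of_all _ h.nonneg)]

lemma cdf_densityMeasure (h : IsProbDensity φ) : cdf (densityMeasure φ) = cdfOf φ := by
  have := h.isProbabilityMeasure
  funext x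
  have hnn : 0 ≤ cdfOf φ x := setIntegral_nonneg measurableSet_Iic fun t _ => h.nonneg t
  rw [← ENNReal.ofReal_eq_ofReal_iff (cdf_nonneg _ x) hnn, ofReal_cdf, h.densityMeasure_Iic]

lemma monotone_cdfOf (h : IsProbDensity φ) : Monotone (cdfOf φ) :=
  h.cdf_densityMeasure ▸ monotone_cdf _

lemma cdfOf_nonneg (h : IsProbDensity φ) (x : ℝ) : 0 ≤ cdfOf φ x :=
  h.cdf_densityMeasure ▸ cdf_nonneg _ x

lemma cdfOf_le_one (h : IsProbDensity φ) (x : ℝ) : cdfOf φ x ≤ 1 :=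
  h.cdf_densityMeasure ▸ cdf_le_one _ x

end IsProbDensity

namespace IsProbDensityOn

variable {φ : ℝ → ℝ} {I : Set ℝ}

lemma eq_zero_of_notMem (h : IsProbDensityOn φ I) {x : ℝ} (hx : x ∉ I) : φ x = 0 :=
  le_antisymm (not_lt.1 fun hpos => hx ((h.pos_iff x).1 hpos)) (h.nonneg x)

lemma ae_mem (h : IsProbDensityOn φ I) : ∀ᵐ x ∂densityMeasure φ, x ∈ I := by
  rw [densityMeasure, ae_withDensity_iff' h.integrable.aemeasurable.ennreal_ofReal]
  exact ae_of_all _ fun x hx => (h.pos_iff x).1 (ENNReal.ofReal_pos.1 (pos_iff_ne_zero.2 hx))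

lemma absolutelyContinuous_restrict (h : IsProbDensityOn φ I) :
    densityMeasure φ ≪ volume.restrict I := by
  intro s hs
  rw [Measure.restrict_apply' h.isOpen.measurableSet] at hs
  have hsI : s =ᵐ[densityMeasure φ] (s ∩ I : Set ℝ) :=
    h.ae_mem.mono fun _ hx => propext (and_iff_left hx).symm
  rw [measure_congr hsI]
  exact withDensity_absolutelyContinuous _ _ hs

lemma cdfOf_lt_cdfOf (h : IsProbDensityOn φ I) {x t : ℝ} (hxt : x < t) (hmem : x ∈ I ∨ t ∈ I) :
    cdfOf φ x < cdfOf φ t := by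
  have hne : (I ∩ Ioo x t).Nonempty := by
    rcases hmem with hx | ht
    · exact nonempty_of_mem (inter_mem (mem_nhdsWithin_of_mem_nhds (h.isOpen.mem_nhds hx))
        (Ioo_mem_nhdsGT hxt))
    · exact nonempty_of_mem (inter_mem (mem_nhdsWithin_of_mem_nhds (h.isOpen.mem_nhds ht))
        (Ioo_mem_nhdsLT hxt))
  have hpos : 0 < ∫ s in x..t, φ s := by
    rw [intervalIntegral.integral_pos_iff_support_of_nonneg_ae (ae_of_all _ h.nonneg)
      h.integrable.intervalIntegrable]
    refine ⟨hxt, ((h.isOpen.inter isOpen_Ioo).measure_pos _ hne).trans_le (measure_mono ?_)⟩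
    exact fun s hs => ⟨((h.pos_iff s).2 hs.1).ne', Ioo_subset_Ioc_self hs.2⟩
  rw [← intervalIntegral.integral_Iic_sub_Iic h.integrable.integrableOn
    h.integrable.integrableOn] at hpos
  exact sub_pos.1 hpos

lemma cdfOf_le_cdfOf_iff (h : IsProbDensityOn φ I) {x t : ℝ} (hmem : x ∈ I ∨ t ∈ I) :
    cdfOf φ x ≤ cdfOf φ t ↔ x ≤ t :=
  ⟨fun hle => not_lt.1 fun htx => (h.cdfOf_lt_cdfOf htx hmem.symm).not_ge hle,
    fun hxt => h.monotone_cdfOf hxt⟩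

lemma injOn_cdfOf (h : IsProbDensityOn φ I) : InjOn (cdfOf φ) I :=
  fun _ hx _ _ hxt => le_antisymm ((h.cdfOf_le_cdfOf_iff (.inl hx)).1 hxt.le)
    ((h.cdfOf_le_cdfOf_iff (.inr hx)).1 hxt.ge)

lemma cdfOf_mem_Ioo (h : IsProbDensityOn φ I) {x : ℝ} (hx : x ∈ I) : cdfOf φ x ∈ Ioo 0 1 :=
  ⟨(h.cdfOf_nonneg _).trans_lt (h.cdfOf_lt_cdfOf (sub_one_lt x) (.inr hx)),
    (h.cdfOf_lt_cdfOf (lt_add_one x) (.inl hx)).trans_le (h.cdfOf_le_one _)⟩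

lemma mem_of_cdfOf_mem_Ioo (h : IsProbDensityOn φ I) (hconn : I.OrdConnected) {x : ℝ}
    (hx : cdfOf φ x ∈ Ioo 0 1) : x ∈ I := by
  have hbelow : ∃ z ∈ I, z ≤ x := by
    by_contra! hI
    refine hx.1.ne' (setIntegral_eq_zero_of_forall_eq_zero fun t ht => ?_)
    exact h.eq_zero_of_notMem fun htI => (hI t htI).not_ge ht
  have habove : ∃ z ∈ I, x ≤ z := by
    by_contra! hI
    have hzero : ∫ t in Ioi x, φ t = 0 := setIntegral_eq_zero_of_forall_eq_zero fun t ht =>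
      h.eq_zero_of_notMem fun htI => (hI t htI).not_gt ht
    have := intervalIntegral.integral_Iic_add_Ioi (b := x) h.integrable.integrableOn
      h.integrable.integrableOn
    rw [hzero, add_zero, h.integral_eq_one] at this
    exact hx.2.ne this
  obtain ⟨z, hz, hzx⟩ := hbelow
  obtain ⟨z', hz', hxz'⟩ := habove
  exact hconn.out hz hz' ⟨hzx, hxz'⟩

lemma image_cdfOf (h : IsProbDensityOn φ I) (hconn : I.OrdConnected) :
    cdfOf φ '' I = Ioo 0 1 := by
  refine subset_antisymm (image_subset_iff.2 fun x hx => h.cdfOf_mem_Ioo hx) fun c hc => ?_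
  have hcdf := h.cdf_densityMeasure
  have := h.isProbabilityMeasure
  obtain ⟨a, ha⟩ := ((tendsto_cdf_atBot (μ := densityMeasure φ)).eventually
    (gt_mem_nhds hc.1)).exists
  obtain ⟨b, hb⟩ := ((tendsto_cdf_atTop (μ := densityMeasure φ)).eventually
    (lt_mem_nhds hc.2)).exists
  rw [hcdf] at ha hb
  obtain ⟨x, hx⟩ := intermediate_value_univ a b (continuous_cdfOf h.integrable) ⟨ha.le, hb.le⟩
  exact ⟨x, h.mem_of_cdfOf_mem_Ioo hconn (hx ▸ hc), hx⟩

lemma densityMeasure_cdfOf_le (h : IsProbDensityOn φ I) (hconn : I.OrdConnected) {c : ℝ}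
    (hc0 : 0 ≤ c) (hc1 : c ≤ 1) : densityMeasure φ {x | cdfOf φ x ≤ c} = ENNReal.ofReal c := by
  have := h.isProbabilityMeasure
  rcases hc0.eq_or_lt with rfl | hc0
  · rw [ENNReal.ofReal_zero, measure_eq_zero_iff_ae_notMem]
    filter_upwards [h.ae_mem] with x hx
    exact (h.cdfOf_mem_Ioo hx).1.not_ge
  rcases hc1.eq_or_lt with rfl | hc1
  · simp [h.cdfOf_le_one]
  obtain ⟨x₀, -, rfl⟩ : c ∈ cdfOf φ '' I := h.image_cdfOf hconn ▸ ⟨hc0, hc1⟩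
  rw [← h.densityMeasure_Iic]
  refine measure_congr (h.ae_mem.mono fun x hx => ?_)
  exact propext (h.cdfOf_le_cdfOf_iff (.inl hx))

lemma integral_densityMeasure (h : IsProbDensityOn φ I) (G : ℝ → ℝ) :
    ∫ x, G x ∂densityMeasure φ = ∫ x in I, G x * φ x := by
  rw [densityMeasure, integral_withDensity_eq_integral_toReal_smul₀
    h.integrable.aemeasurable.ennreal_ofReal (ae_of_all _ fun _ => ENNReal.ofReal_lt_top),
    setIntegral_eq_integral_of_forall_compl_eq_zero fun x hx => by
      rw [h.eq_zero_of_notMem hx, mul_zero]]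
  congr 1 with x
  rw [ENNReal.toReal_ofReal (h.nonneg x), smul_eq_mul, mul_comm]

lemma integrable_densityMeasure_iff (h : IsProbDensityOn φ I) (G : ℝ → ℝ) :
    Integrable G (densityMeasure φ) ↔ IntegrableOn (fun x => G x * φ x) I := by
  rw [densityMeasure, integrable_withDensity_iff_integrable_smul₀'
    h.integrable.aemeasurable.ennreal_ofReal (ae_of_all _ fun _ => ENNReal.ofReal_lt_top),
    integrableOn_iff_integrable_of_support_subset fun x hx => by_contra fun hxI => hx <| by
      simp only [h.eq_zero_of_notMem hxI, mul_zero]]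
  congr! 2 with x
  rw [ENNReal.toReal_ofReal (h.nonneg x), smul_eq_mul, mul_comm]

lemma quantileOn_spec (h : IsProbDensityOn φ I) (hconn : I.OrdConnected) {c : ℝ}
    (hc : c ∈ Ioo 0 1) : quantileOn φ I c ∈ I ∧ cdfOf φ (quantileOn φ I c) = c :=
  Function.invFunOn_pos (by rwa [← mem_image, h.image_cdfOf hconn])

lemma quantileOn_cdfOf (h : IsProbDensityOn φ I) {x : ℝ} (hx : x ∈ I) :
    quantileOn φ I (cdfOf φ x) = x :=
  h.injOn_cdfOf.leftInvOn_invFunOn hx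

lemma monotoneOn_quantileOn (h : IsProbDensityOn φ I) (hconn : I.OrdConnected) :
    MonotoneOn (quantileOn φ I) (Ioo 0 1) := fun c hc c' hc' hcc' => by
  rw [← h.cdfOf_le_cdfOf_iff (.inl (h.quantileOn_spec hconn hc).1),
    (h.quantileOn_spec hconn hc).2, (h.quantileOn_spec hconn hc').2]
  exact hcc'

end IsProbDensityOn

lemma quantileOn_le_quantileOn_of_cdfOf_le {φa φb : ℝ → ℝ} {Ia Ib : Set ℝ}
    (ha : IsProbDensityOn φa Ia) (hIa : Ia.OrdConnected)
    (hb : IsProbDensityOn φb Ib) (hIb : Ib.OrdConnected)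
    (hdom : ∀ t, cdfOf φb t ≤ cdfOf φa t) {c : ℝ} (hc : c ∈ Ioo 0 1) :
    quantileOn φa Ia c ≤ quantileOn φb Ib c := by
  rw [← hb.cdfOf_le_cdfOf_iff (.inr (hb.quantileOn_spec hIb hc).1),
    (hb.quantileOn_spec hIb hc).2]
  exact (hdom _).trans (ha.quantileOn_spec hIa hc).2.le

namespace IsBindingMap

variable {φ φ₂ K G : ℝ → ℝ} {I I₂ : Set ℝ}

lemma monotoneOn (hK : IsBindingMap φ I φ₂ I₂ K) (hφ : IsProbDensity φ)
    (hφ₂ : IsProbDensityOn φ₂ I₂) : MonotoneOn K I :=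
  fun x hx x' hx' hxx' => (hφ₂.cdfOf_le_cdfOf_iff (.inl (hK x hx).1)).1 <| by
    rw [(hK x hx).2, (hK x' hx').2]
    exact hφ.monotone_cdfOf hxx'

lemma aemeasurable (hK : IsBindingMap φ I φ₂ I₂ K) (hφ : IsProbDensityOn φ I)
    (hφ₂ : IsProbDensityOn φ₂ I₂) : AEMeasurable K (densityMeasure φ) :=
  (aemeasurable_restrict_of_monotoneOn hφ.isOpen.measurableSet
    (hK.monotoneOn hφ.toIsProbDensity hφ₂)).mono_ac hφ.absolutelyContinuous_restrict

lemma map_densityMeasure (hK : IsBindingMap φ I φ₂ I₂ K) (hφ : IsProbDensityOn φ I)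
    (hconn : I.OrdConnected) (hφ₂ : IsProbDensityOn φ₂ I₂) :
    (densityMeasure φ).map K = densityMeasure φ₂ := by
  have := hφ.isProbabilityMeasure
  have hKm := hK.aemeasurable hφ hφ₂
  have := Measure.isProbabilityMeasure_map hKm
  refine Measure.ext_of_Iic _ _ fun y => ?_
  rw [Measure.map_apply_of_aemeasurable hKm measurableSet_Iic, hφ₂.densityMeasure_Iic,
    ← hφ.densityMeasure_cdfOf_le hconn (hφ₂.cdfOf_nonneg y) (hφ₂.cdfOf_le_one y)]
  refine measure_congr (hφ.ae_mem.mono fun x hx => ?_)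
  show (K x ≤ y) = (cdfOf φ x ≤ cdfOf φ₂ y)
  rw [← (hK x hx).2]
  exact propext (hφ₂.cdfOf_le_cdfOf_iff (.inl (hK x hx).1)).symm

lemma setIntegral_comp_mul (hK : IsBindingMap φ I φ₂ I₂ K) (hφ : IsProbDensityOn φ I)
    (hconn : I.OrdConnected) (hφ₂ : IsProbDensityOn φ₂ I₂)
    (hG : AEStronglyMeasurable G (volume.restrict I₂)) :
    ∫ x in I, G (K x) * φ x = ∫ y in I₂, G y * φ₂ y := by
  have hmap := hK.map_densityMeasure hφ hconn hφ₂
  have hG' : AEStronglyMeasurable G ((densityMeasure φ).map K) :=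
    hmap ▸ hG.mono_ac hφ₂.absolutelyContinuous_restrict
  rw [← hφ.integral_densityMeasure (fun x => G (K x)), ← hφ₂.integral_densityMeasure, ← hmap,
    integral_map (hK.aemeasurable hφ hφ₂) hG']

lemma integrableOn_comp_mul_iff (hK : IsBindingMap φ I φ₂ I₂ K) (hφ : IsProbDensityOn φ I)
    (hconn : I.OrdConnected) (hφ₂ : IsProbDensityOn φ₂ I₂)
    (hG : AEStronglyMeasurable G (volume.restrict I₂)) :
    IntegrableOn (fun x => G (K x) * φ x) I ↔ IntegrableOn (fun y => G y * φ₂ y) I₂ := by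
  have hmap := hK.map_densityMeasure hφ hconn hφ₂
  have hG' : AEStronglyMeasurable G ((densityMeasure φ).map K) :=
    hmap ▸ hG.mono_ac hφ₂.absolutelyContinuous_restrict
  rw [← hφ.integrable_densityMeasure_iff (fun x => G (K x)),
    ← hφ₂.integrable_densityMeasure_iff, ← hmap,
    integrable_map_measure hG' (hK.aemeasurable hφ hφ₂)]
  rfl

lemma integrableOn_and_portfolio_value_eq {q : ℝ → ℝ} (hK : IsBindingMap φ I φ₂ I₂ K)
    (hφ : IsProbDensityOn φ I) (hconn : I.OrdConnected) (hφ₂ : IsProbDensityOn φ₂ I₂)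
    (hq : AEStronglyMeasurable q)
    (hint : IntegrableOn (fun x => x * (φ x / φ₂ (K x)) * q (K x)) I) :
    IntegrableOn (fun y => quantileOn φ I (cdfOf φ₂ y) * q y) I₂ ∧
      ∫ x in I, x * (φ x / φ₂ (K x)) * q (K x)
        = ∫ y in I₂, quantileOn φ I (cdfOf φ₂ y) * q y := by
  set G : ℝ → ℝ := fun y => quantileOn φ I (cdfOf φ₂ y) * (q y / φ₂ y)
  have hL : MonotoneOn (fun y => quantileOn φ I (cdfOf φ₂ y)) I₂ := fun y hy y' hy' hyy' =>
    hφ.monotoneOn_quantileOn hconn (hφ₂.cdfOf_mem_Ioo hy) (hφ₂.cdfOf_mem_Ioo hy')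
      (hφ₂.monotone_cdfOf hyy')
  have hG : AEStronglyMeasurable G (volume.restrict I₂) :=
    ((aemeasurable_restrict_of_monotoneOn hφ₂.isOpen.measurableSet hL).mul
      (hq.aemeasurable.restrict.div hφ₂.integrable.aemeasurable.restrict)).aestronglyMeasurable
  have hsource : EqOn (fun x => G (K x) * φ x) (fun x => x * (φ x / φ₂ (K x)) * q (K x)) I :=
    fun x hx => by
      simp only [G, (hK x hx).2, hφ.quantileOn_cdfOf hx]
      ring
  have htarget : EqOn (fun y => G y * φ₂ y) (fun y => quantileOn φ I (cdfOf φ₂ y) * q y) I₂ :=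
    fun y hy => by
      have := ((hφ₂.pos_iff y).2 hy).ne'
      simp only [G]
      field_simp
  refine ⟨?_, ?_⟩
  · rw [← integrableOn_congr_fun htarget hφ₂.isOpen.measurableSet,
      ← hK.integrableOn_comp_mul_iff hφ hconn hφ₂ hG,
      integrableOn_congr_fun hsource hφ.isOpen.measurableSet]
    exact hint
  · rw [← setIntegral_congr_fun hφ.isOpen.measurableSet hsource,
      hK.setIntegral_comp_mul hφ hconn hφ₂ hG,
      setIntegral_congr_fun hφ₂.isOpen.measurableSet htarget]

end IsBindingMap

theorem stmt5_general
    (φ₂ q φa φb : ℝ → ℝ) (I₂ Ia Ib : Set ℝ)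
    (hφ₂nn : ∀ x, 0 ≤ φ₂ x)
    (hφ₂i : Integrable φ₂) (hφ₂1 : ∫ x, φ₂ x = 1)
    (hI₂o : IsOpen I₂)
    (hpos₂ : ∀ x, 0 < φ₂ x ↔ x ∈ I₂)
    (hqnn : ∀ y, 0 ≤ q y) (hqi : Integrable q)
    (hφann : ∀ x, 0 ≤ φa x)
    (hφai : Integrable φa) (hφa1 : ∫ x, φa x = 1)
    (hIao : IsOpen Ia) (hIaconn : Ia.OrdConnected)
    (hposa : ∀ x, 0 < φa x ↔ x ∈ Ia)
    (hφbnn : ∀ x, 0 ≤ φb x)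
    (hφbi : Integrable φb) (hφb1 : ∫ x, φb x = 1)
    (hIbo : IsOpen Ib) (hIbconn : Ib.OrdConnected)
    (hposb : ∀ x, 0 < φb x ↔ x ∈ Ib)
    (Ka Kb : ℝ → ℝ)
    (hKa : ∀ x ∈ Ia, Ka x ∈ I₂ ∧ cdfOf φ₂ (Ka x) = cdfOf φa x)
    (hKb : ∀ x ∈ Ib, Kb x ∈ I₂ ∧ cdfOf φ₂ (Kb x) = cdfOf φb x)
    (hdom : ∀ t, cdfOf φb t ≤ cdfOf φa t)
    (hinta : IntegrableOn (fun x => x * (φa x / φ₂ (Ka x)) * q (Ka x)) Ia)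
    (hintb : IntegrableOn (fun x => x * (φb x / φ₂ (Kb x)) * q (Kb x)) Ib) :
    (∫ x in Ia, x * (φa x / φ₂ (Ka x)) * q (Ka x))
      ≤ ∫ x in Ib, x * (φb x / φ₂ (Kb x)) * q (Kb x) := by
  have h₂ : IsProbDensityOn φ₂ I₂ := ⟨⟨hφ₂nn, hφ₂i, hφ₂1⟩, hI₂o, hpos₂⟩
  have ha : IsProbDensityOn φa Ia := ⟨⟨hφann, hφai, hφa1⟩, hIao, hposa⟩
  have hb : IsProbDensityOn φb Ib := ⟨⟨hφbnn, hφbi, hφb1⟩, hIbo, hposb⟩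
  obtain ⟨hLa, hVa⟩ := IsBindingMap.integrableOn_and_portfolio_value_eq hKa ha hIaconn h₂
    hqi.aestronglyMeasurable hinta
  obtain ⟨hLb, hVb⟩ := IsBindingMap.integrableOn_and_portfolio_value_eq hKb hb hIbconn h₂
    hqi.aestronglyMeasurable hintb
  rw [hVa, hVb]
  refine setIntegral_mono_on hLa hLb hI₂o.measurableSet fun y hy => ?_
  exact mul_le_mul_of_nonneg_right
    (quantileOn_le_quantileOn_of_cdfOf_le ha hIaconn hb hIbconn hdom (h₂.cdfOf_mem_Ioo hy))
    (hqnn y)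

/-- Monotonicity w.r.t. first-order stochastic dominance: with cash-flow
densities `φa`, `φb` (continuous, positive exactly on open intervals `Ia`, `Ib`) whose
CDFs satisfy `Fa ≥ Fb` pointwise, and with finite portfolio values, one has
`V(φa) ≤ V(φb)`. -/
theorem stmt5
    (φ₂ q φa φb : ℝ → ℝ) (I₂ Ia Ib : Set ℝ)
    (hφ₂c : Continuous φ₂) (hφ₂nn : ∀ x, 0 ≤ φ₂ x)
    (hφ₂i : Integrable φ₂) (hφ₂1 : ∫ x, φ₂ x = 1)
    (hI₂o : IsOpen I₂) (hI₂conn : I₂.OrdConnected)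
    (hpos₂ : ∀ x, 0 < φ₂ x ↔ x ∈ I₂)
    (hqnn : ∀ y, 0 ≤ q y) (hqi : Integrable q)
    (hφac : Continuous φa) (hφann : ∀ x, 0 ≤ φa x)
    (hφai : Integrable φa) (hφa1 : ∫ x, φa x = 1)
    (hIao : IsOpen Ia) (hIaconn : Ia.OrdConnected)
    (hposa : ∀ x, 0 < φa x ↔ x ∈ Ia)
    (hφbc : Continuous φb) (hφbnn : ∀ x, 0 ≤ φb x)
    (hφbi : Integrable φb) (hφb1 : ∫ x, φb x = 1)
    (hIbo : IsOpen Ib) (hIbconn : Ib.OrdConnected)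
    (hposb : ∀ x, 0 < φb x ↔ x ∈ Ib)
    (Ka Kb : ℝ → ℝ)
    (hKa : ∀ x ∈ Ia, Ka x ∈ I₂ ∧ cdfOf φ₂ (Ka x) = cdfOf φa x)
    (hKb : ∀ x ∈ Ib, Kb x ∈ I₂ ∧ cdfOf φ₂ (Kb x) = cdfOf φb x)
    (hdom : ∀ t, cdfOf φb t ≤ cdfOf φa t)
    (hinta : IntegrableOn (fun x => x * (φa x / φ₂ (Ka x)) * q (Ka x)) Ia)
    (hintb : IntegrableOn (fun x => x * (φb x / φ₂ (Kb x)) * q (Kb x)) Ib) :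
    (∫ x in Ia, x * (φa x / φ₂ (Ka x)) * q (Ka x))
      ≤ ∫ x in Ib, x * (φb x / φ₂ (Kb x)) * q (Kb x) :=
  stmt5_general φ₂ q φa φb I₂ Ia Ib hφ₂nn hφ₂i hφ₂1 hI₂o hpos₂ hqnn hqi hφann hφai hφa1 hIao hIaconn
    hposa hφbnn hφbi hφb1 hIbo hIbconn hposb Ka Kb hKa hKb hdom hinta hintb
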